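/- Let X, Y, Z, W be subsets of Fin m with |X| < m, let A = Δ_X^c, B = Δ_Y, C = Δ_Z, E = Δ_W, and set b = |Y|+|Z|+|W|. Then: the number of messages t ∈ (Fin m → 𝔽₂)⁴ with w(t) = 0 equals 2^{3m−b}; the number of t with 2·w(t) = 2^{m+b} equals (2^{m−|X|} − 1)·2^{3m−b}; and the number of t with 2·w(t) = (2^m − 2^{|X|})·2^b equals (2^{m+b} − 2^{m−|X|})·2^{3m−b}. (Hence C_D^{(2)} is a two-weight binary linear code of length (2^m − 2^{|X|})·2^b, dimension m + b and minimum distance (2^m − 2^{|X|})·2^{b−1}.) -/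
import Mathlib


open Finset

/-- Euclidean dot product of vectors over `𝔽₂`. -/
def dotp {m : ℕ} (x y : Fin m → ZMod 2) : ZMod 2 := ∑ i, x i * y i

/-- Support of a vector over `𝔽₂`. -/
def supp {m : ℕ} (v : Fin m → ZMod 2) : Finset (Fin m) :=
  Finset.univ.filter fun i => v i ≠ 0

/-- The simplicial complex `Δ_S` generated by `S ⊆ [m]`. -/
def delta {m : ℕ} (S : Finset (Fin m)) : Finset (Fin m → ZMod 2) :=
  Finset.univ.filter fun u => supp u ⊆ S

/-- The complement `Δ_S^c` of the simplicial complex generated by `S`. -/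
def deltac {m : ℕ} (S : Finset (Fin m)) : Finset (Fin m → ZMod 2) :=
  Finset.univ \ delta S

/-- A message `(x₁, x₂, x₃, x₄)` consisting of four vectors over `𝔽₂`. -/
abbrev Msg (m : ℕ) :=
  (Fin m → ZMod 2) × (Fin m → ZMod 2) × (Fin m → ZMod 2) × (Fin m → ZMod 2)

/-- The value of the codeword of the subfield code `C_D^{(2)}` associated to the
message `t = (x₁,x₂,x₃,x₄)` at the position `p = (a,b,c,e)`:
`(x₁+x₄)·a + x₃·b + x₂·c + x₁·e`. -/
def cword {m : ℕ} (t p : Msg m) : ZMod 2 :=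
  dotp (t.1 + t.2.2.2) p.1 + dotp t.2.2.1 p.2.1 + dotp t.2.1 p.2.2.1 +
    dotp t.1 p.2.2.2

/-- Hamming weight of the codeword associated to the message `t`, for the code
with defining positions `A × B × C × E`. -/
def cw {m : ℕ} (A B C E : Finset (Fin m → ZMod 2)) (t : Msg m) : ℕ :=
  ((A ×ˢ B ×ˢ C ×ˢ E).filter fun p => cword t p = 1).card

variable {m : ℕ}

lemma zmod2_em : ∀ x : ZMod 2, x = 0 ∨ x = 1 := by decide

lemma mem_delta {S : Finset (Fin m)} {u : Fin m → ZMod 2} :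
    u ∈ delta S ↔ ∀ i ∉ S, u i = 0 := by
  rw [delta, Finset.mem_filter]
  simp only [Finset.mem_univ, true_and, Finset.subset_iff, supp, Finset.mem_filter,
    Finset.mem_univ, true_and]
  constructor
  · intro h i hi
    by_contra hne
    exact hi (h hne)
  · intro h i hi
    by_contra hiS
    exact hi (h i hiS)

lemma mem_delta_compl {S : Finset (Fin m)} {u : Fin m → ZMod 2} :
    u ∈ delta Sᶜ ↔ ∀ i ∈ S, u i = 0 := by
  rw [mem_delta]
  simp

lemma card_univ_fun : (Finset.univ : Finset (Fin m → ZMod 2)).card = 2 ^ m := by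
  simp [Finset.card_univ]

lemma card_delta (S : Finset (Fin m)) : (delta S).card = 2 ^ S.card := by
  have h : delta S = Fintype.piFinset
      (fun i => if i ∈ S then (Finset.univ : Finset (ZMod 2)) else {0}) := by
    ext u
    simp only [mem_delta, Fintype.mem_piFinset]
    constructor
    · intro h i
      by_cases hi : i ∈ S <;> simp [hi, h]
    · intro h i hi
      simpa [hi] using h i
  rw [h, Fintype.card_piFinset]
  have h2 : ∀ i, (if i ∈ S then (Finset.univ : Finset (ZMod 2)) else {0}).card
      = if i ∈ S then 2 else 1 := by intro i; split <;> simp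
  simp only [h2]
  rw [Finset.prod_ite_mem, Finset.univ_inter, Finset.prod_const]

lemma card_deltac (S : Finset (Fin m)) : (deltac S).card = 2 ^ m - 2 ^ S.card := by
  rw [deltac, Finset.card_sdiff_of_subset (Finset.subset_univ _), card_delta, card_univ_fun]

lemma dotp_add_right (x u v : Fin m → ZMod 2) :
    dotp x (u + v) = dotp x u + dotp x v := by
  simp [dotp, mul_add, Finset.sum_add_distrib]

lemma dotp_single (x : Fin m → ZMod 2) (i : Fin m) : dotp x (Pi.single i 1) = x i := by
  simp [dotp, Pi.single_apply, mul_ite]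

lemma dotp_zero_left (u : Fin m → ZMod 2) : dotp 0 u = 0 := by simp [dotp]

lemma dotp_eq_zero {S : Finset (Fin m)} {x u : Fin m → ZMod 2}
    (hx : ∀ i ∈ S, x i = 0) (hu : u ∈ delta S) : dotp x u = 0 := by
  rw [mem_delta] at hu
  rw [dotp]
  apply Finset.sum_eq_zero
  intro i _
  by_cases h : i ∈ S
  · simp [hx i h]
  · simp [hu i h]

lemma add_single_add_single (u : Fin m → ZMod 2) (i : Fin m) :
    u + Pi.single i 1 + Pi.single i 1 = u := by
  have h11 : (1 : ZMod 2) + 1 = 0 := by decide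
  ext j
  by_cases h : j = i
  · subst h
    simp [Pi.single_apply, add_assoc, h11]
  · simp [Pi.single_apply, h]

lemma fun_add_self (u : Fin m → ZMod 2) : u + u = 0 := by
  ext j
  have : ∀ a : ZMod 2, a + a = 0 := by decide
  simp [this]

lemma eq_of_add_eq_zero' {u w : Fin m → ZMod 2} (h : u + w = 0) : w = u := by
  have : ∀ a b : ZMod 2, a + b = 0 → b = a := by decide
  ext j
  exact this _ _ (congrFun h j)

lemma cancel_add_left (u w : Fin m → ZMod 2) : u + (u + w) = w := by
  rw [← add_assoc, fun_add_self, zero_add]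

lemma delta_add_single {S : Finset (Fin m)} {u : Fin m → ZMod 2}
    (hu : u ∈ delta S) {i : Fin m} (hi : i ∈ S) :
    u + Pi.single i 1 ∈ delta S := by
  rw [mem_delta] at *
  intro j hj
  have hne : j ≠ i := fun h => hj (h ▸ hi)
  simp [Pi.single_apply, hne, hu j hj]

lemma deltac_add_single {S : Finset (Fin m)} {u : Fin m → ZMod 2}
    (hu : u ∈ deltac S) {i : Fin m} (hi : i ∈ S) :
    u + Pi.single i 1 ∈ deltac S := by
  simp only [deltac, Finset.mem_sdiff, Finset.mem_univ, true_and] at *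
  intro h
  have := delta_add_single h hi
  rw [add_single_add_single] at this
  exact hu this

lemma half_card {α : Type*} [DecidableEq α] (D : Finset α) (f : α → ZMod 2)
    (σ : α → α) (hσD : ∀ a ∈ D, σ a ∈ D) (hσσ : ∀ a, σ (σ a) = a)
    (hf : ∀ a, f (σ a) = f a + 1) :
    2 * (D.filter fun a => f a = 1).card = D.card := by
  have key : (D.filter fun a => f a = 1).card = (D.filter fun a => ¬ f a = 1).card := by
    apply Finset.card_bij (fun a _ => σ a)
    · intro a ha
      simp only [Finset.mem_filter] at *
      refine ⟨hσD a ha.1, ?_⟩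
      rw [hf, ha.2]
      decide
    · intro a ha b hb hab
      have := congrArg σ hab
      rwa [hσσ, hσσ] at this
    · intro b hb
      simp only [Finset.mem_filter] at hb
      refine ⟨σ b, ?_, hσσ b⟩
      simp only [Finset.mem_filter]
      refine ⟨hσD b hb.1, ?_⟩
      rcases zmod2_em (f b) with h | h
      · rw [hf, h]; decide
      · exact absurd h hb.2
  have h2 := Finset.card_filter_add_card_filter_not (s := D) (p := fun a => f a = 1)
  omega

def Q0 (Y Z W : Finset (Fin m)) (t : Msg m) : Prop :=
  (∀ i ∈ Y, t.2.2.1 i = 0) ∧ (∀ i ∈ Z, t.2.1 i = 0) ∧ (∀ i ∈ W, t.1 i = 0) ∧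
    t.1 + t.2.2.2 = 0

def Q1 (X Y Z W : Finset (Fin m)) (t : Msg m) : Prop :=
  (∀ i ∈ Y, t.2.2.1 i = 0) ∧ (∀ i ∈ Z, t.2.1 i = 0) ∧ (∀ i ∈ W, t.1 i = 0) ∧
    t.1 + t.2.2.2 ≠ 0 ∧ (∀ i ∈ X, (t.1 + t.2.2.2) i = 0)

instance (Y Z W : Finset (Fin m)) : DecidablePred (Q0 Y Z W) := fun t => by
  unfold Q0; infer_instance

instance (X Y Z W : Finset (Fin m)) : DecidablePred (Q1 X Y Z W) := fun t => by
  unfold Q1; infer_instance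

lemma weight0 (X Y Z W : Finset (Fin m)) (t : Msg m) (h : Q0 Y Z W t) :
    cw (deltac X) (delta Y) (delta Z) (delta W) t = 0 := by
  obtain ⟨hY, hZ, hW, hv⟩ := h
  rw [cw, Finset.card_eq_zero, Finset.filter_eq_empty_iff]
  intro p hp
  simp only [Finset.mem_product] at hp
  obtain ⟨ha, hb, hc, he⟩ := hp
  simp only [cword, hv, dotp_zero_left, dotp_eq_zero hY hb, dotp_eq_zero hZ hc,
    dotp_eq_zero hW he]
  decide

lemma weight1 (X Y Z W : Finset (Fin m)) (t : Msg m)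
    (hY : ∀ i ∈ Y, t.2.2.1 i = 0) (hZ : ∀ i ∈ Z, t.2.1 i = 0)
    (hW : ∀ i ∈ W, t.1 i = 0) (hv : t.1 + t.2.2.2 ≠ 0)
    (hvX : ∀ i ∈ X, (t.1 + t.2.2.2) i = 0) :
    2 * cw (deltac X) (delta Y) (delta Z) (delta W) t
      = 2 ^ m * (2 ^ Y.card * (2 ^ Z.card * 2 ^ W.card)) := by
  set v := t.1 + t.2.2.2 with hvdef
  have hsplit : ((deltac X ×ˢ delta Y ×ˢ delta Z ×ˢ delta W).filter
        fun p => cword t p = 1)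
      = (Finset.univ.filter fun a => dotp v a = 1) ×ˢ delta Y ×ˢ delta Z ×ˢ delta W := by
    ext p
    simp only [Finset.mem_filter, Finset.mem_product, Finset.mem_univ, true_and]
    constructor
    · rintro ⟨⟨ha, hb, hc, he⟩, h1⟩
      refine ⟨?_, hb, hc, he⟩
      simp only [cword, dotp_eq_zero hY hb, dotp_eq_zero hZ hc, dotp_eq_zero hW he] at h1
      simpa using h1
    · rintro ⟨ha, hb, hc, he⟩
      have haA : p.1 ∈ deltac X := by
        simp only [deltac, Finset.mem_sdiff, Finset.mem_univ, true_and]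
        intro hmem
        rw [dotp_eq_zero hvX hmem] at ha
        exact (by decide : ¬ (0 : ZMod 2) = 1) ha
      refine ⟨⟨haA, hb, hc, he⟩, ?_⟩
      simp only [cword, dotp_eq_zero hY hb, dotp_eq_zero hZ hc, dotp_eq_zero hW he]
      simpa using ha
  rw [cw, hsplit, Finset.card_product, Finset.card_product, Finset.card_product,
    card_delta, card_delta, card_delta, ← mul_assoc]
  congr 1
  obtain ⟨i, hi⟩ := Function.ne_iff.mp hv
  have hi1 : v i = 1 := by
    rcases zmod2_em (v i) with h | h
    · exact absurd (by simpa using h) hi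
    · exact h
  have key := half_card (Finset.univ : Finset (Fin m → ZMod 2)) (fun a => dotp v a)
    (fun a => a + Pi.single i 1) (by simp) (fun a => add_single_add_single a i)
    (fun a => by show dotp v (a + Pi.single i 1) = dotp v a + 1; rw [dotp_add_right, dotp_single, hi1])
  rw [card_univ_fun] at key
  exact key

lemma weight2core (X Y Z W : Finset (Fin m)) (t : Msg m) (σ : Msg m → Msg m)
    (hcl : ∀ p ∈ deltac X ×ˢ delta Y ×ˢ delta Z ×ˢ delta W,
      σ p ∈ deltac X ×ˢ delta Y ×ˢ delta Z ×ˢ delta W)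
    (hinv : ∀ p, σ (σ p) = p)
    (hflip : ∀ p, cword t (σ p) = cword t p + 1) :
    2 * cw (deltac X) (delta Y) (delta Z) (delta W) t
      = (2 ^ m - 2 ^ X.card) * (2 ^ Y.card * (2 ^ Z.card * 2 ^ W.card)) := by
  rw [cw, half_card _ _ σ hcl hinv hflip, Finset.card_product, Finset.card_product,
    Finset.card_product, card_delta, card_delta, card_delta, card_deltac]

lemma weight2 (X Y Z W : Finset (Fin m)) (t : Msg m) (h0 : ¬ Q0 Y Z W t)
    (h1 : ¬ Q1 X Y Z W t) :
    2 * cw (deltac X) (delta Y) (delta Z) (delta W) t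
      = (2 ^ m - 2 ^ X.card) * (2 ^ Y.card * (2 ^ Z.card * 2 ^ W.card)) := by
  by_cases hY : ∀ i ∈ Y, t.2.2.1 i = 0
  · by_cases hZ : ∀ i ∈ Z, t.2.1 i = 0
    · by_cases hW : ∀ i ∈ W, t.1 i = 0
      · -- the A-flip case
        have hvX : ¬ ∀ i ∈ X, (t.1 + t.2.2.2) i = 0 := by
          intro hvX
          by_cases hv : t.1 + t.2.2.2 = 0
          · exact h0 ⟨hY, hZ, hW, hv⟩
          · exact h1 ⟨hY, hZ, hW, hv, hvX⟩
        push_neg at hvX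
        obtain ⟨i, hiX, hi⟩ := hvX
        have hi1 : (t.1 + t.2.2.2) i = 1 := (zmod2_em _).resolve_left hi
        apply weight2core X Y Z W t (fun p => (p.1 + Pi.single i 1, p.2))
        · intro p hp
          simp only [Finset.mem_product] at hp ⊢
          exact ⟨deltac_add_single hp.1 hiX, hp.2⟩
        · intro p
          show (p.1 + Pi.single i 1 + Pi.single i 1, p.2) = p
          rw [add_single_add_single]
        · intro p
          show cword t (p.1 + Pi.single i 1, p.2) = cword t p + 1
          simp only [cword, dotp_add_right, dotp_single, hi1]
          ring
      · push_neg at hW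
        obtain ⟨i, hiW, hi⟩ := hW
        have hi1 : t.1 i = 1 := (zmod2_em _).resolve_left hi
        apply weight2core X Y Z W t
          (fun p => (p.1, p.2.1, p.2.2.1, p.2.2.2 + Pi.single i 1))
        · intro p hp
          simp only [Finset.mem_product] at hp ⊢
          exact ⟨hp.1, hp.2.1, hp.2.2.1, delta_add_single hp.2.2.2 hiW⟩
        · intro p
          show (p.1, p.2.1, p.2.2.1, p.2.2.2 + Pi.single i 1 + Pi.single i 1) = p
          rw [add_single_add_single]
        · intro p
          show cword t (p.1, p.2.1, p.2.2.1, p.2.2.2 + Pi.single i 1) = cword t p + 1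
          simp only [cword, dotp_add_right, dotp_single, hi1]
          ring
    · push_neg at hZ
      obtain ⟨i, hiZ, hi⟩ := hZ
      have hi1 : t.2.1 i = 1 := (zmod2_em _).resolve_left hi
      apply weight2core X Y Z W t
        (fun p => (p.1, p.2.1, p.2.2.1 + Pi.single i 1, p.2.2.2))
      · intro p hp
        simp only [Finset.mem_product] at hp ⊢
        exact ⟨hp.1, hp.2.1, delta_add_single hp.2.2.1 hiZ, hp.2.2.2⟩
      · intro p
        show (p.1, p.2.1, p.2.2.1 + Pi.single i 1 + Pi.single i 1, p.2.2.2) = p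
        rw [add_single_add_single]
      · intro p
        show cword t (p.1, p.2.1, p.2.2.1 + Pi.single i 1, p.2.2.2) = cword t p + 1
        simp only [cword, dotp_add_right, dotp_single, hi1]
        ring
  · push_neg at hY
    obtain ⟨i, hiY, hi⟩ := hY
    have hi1 : t.2.2.1 i = 1 := (zmod2_em _).resolve_left hi
    apply weight2core X Y Z W t
      (fun p => (p.1, p.2.1 + Pi.single i 1, p.2.2))
    · intro p hp
      simp only [Finset.mem_product] at hp ⊢
      exact ⟨hp.1, delta_add_single hp.2.1 hiY, hp.2.2⟩
    · intro p
      show (p.1, p.2.1 + Pi.single i 1 + Pi.single i 1, p.2.2) = p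
      rw [add_single_add_single]
    · intro p
      show cword t (p.1, p.2.1 + Pi.single i 1, p.2.2) = cword t p + 1
      simp only [cword, dotp_add_right, dotp_single, hi1]
      ring

lemma card_Q0 (Y Z W : Finset (Fin m)) :
    (Finset.univ.filter (Q0 Y Z W)).card
      = 2 ^ (m - Y.card) * (2 ^ (m - Z.card) * 2 ^ (m - W.card)) := by
  have hcard : (delta Yᶜ ×ˢ delta Zᶜ ×ˢ delta Wᶜ).card
      = (Finset.univ.filter (Q0 Y Z W)).card := by
    apply Finset.card_bij' (fun q _ => ((q.2.2, q.2.1, q.1, q.2.2) : Msg m))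
      (fun t _ => ((t.2.2.1, t.2.1, t.1) : _))
    · intro q hq
      simp only [Finset.mem_product, mem_delta_compl] at hq
      simp only [Finset.mem_filter, Finset.mem_univ, true_and]
      exact ⟨hq.1, hq.2.1, hq.2.2, fun_add_self _⟩
    · intro t ht
      simp only [Finset.mem_filter, Finset.mem_univ, true_and] at ht
      simp only [Finset.mem_product, mem_delta_compl]
      exact ⟨ht.1, ht.2.1, ht.2.2.1⟩
    · intro q hq
      rfl
    · intro t ht
      simp only [Finset.mem_filter, Finset.mem_univ, true_and] at ht
      have h4 : t.2.2.2 = t.1 := eq_of_add_eq_zero' ht.2.2.2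
      have heta : t = (t.1, t.2.1, t.2.2.1, t.2.2.2) := rfl
      rw [heta, h4]
  rw [← hcard, Finset.card_product, Finset.card_product, card_delta, card_delta,
    card_delta, Finset.card_compl, Finset.card_compl, Finset.card_compl, Fintype.card_fin]

lemma card_Q1 (X Y Z W : Finset (Fin m)) :
    (Finset.univ.filter (Q1 X Y Z W)).card
      = 2 ^ (m - Y.card) * (2 ^ (m - Z.card) * (2 ^ (m - W.card) *
          (2 ^ (m - X.card) - 1))) := by
  have h0mem : (0 : Fin m → ZMod 2) ∈ delta Xᶜ := by
    rw [mem_delta_compl]; intro i _; rfl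
  have hcard : (delta Yᶜ ×ˢ delta Zᶜ ×ˢ delta Wᶜ ×ˢ (delta Xᶜ).erase 0).card
      = (Finset.univ.filter (Q1 X Y Z W)).card := by
    apply Finset.card_bij'
      (fun q _ => ((q.2.2.1, q.2.1, q.1, q.2.2.1 + q.2.2.2) : Msg m))
      (fun t _ => ((t.2.2.1, t.2.1, t.1, t.1 + t.2.2.2) : _))
    · intro q hq
      simp only [Finset.mem_product, mem_delta_compl, Finset.mem_erase] at hq
      simp only [Finset.mem_filter, Finset.mem_univ, true_and]
      refine ⟨hq.1, hq.2.1, hq.2.2.1, ?_, ?_⟩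
      · rw [cancel_add_left]
        exact hq.2.2.2.1
      · rw [cancel_add_left]
        exact hq.2.2.2.2
    · intro t ht
      simp only [Finset.mem_filter, Finset.mem_univ, true_and] at ht
      simp only [Finset.mem_product, mem_delta_compl, Finset.mem_erase]
      exact ⟨ht.1, ht.2.1, ht.2.2.1, ht.2.2.2.1, ht.2.2.2.2⟩
    · intro q hq
      show ((q.1, q.2.1, q.2.2.1, q.2.2.1 + (q.2.2.1 + q.2.2.2)) : Msg m) = q
      rw [cancel_add_left]
    · intro t ht
      show ((t.1, t.2.1, t.2.2.1, t.1 + (t.1 + t.2.2.2)) : Msg m) = t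
      rw [cancel_add_left]
  rw [← hcard, Finset.card_product, Finset.card_product, Finset.card_product,
    card_delta, card_delta, card_delta, Finset.card_erase_of_mem h0mem, card_delta,
    Finset.card_compl, Finset.card_compl, Finset.card_compl, Finset.card_compl,
    Fintype.card_fin]


theorem stmt6 (m : ℕ) (hm : 0 < m) (X Y Z W : Finset (Fin m)) (hX : X.card < m) :
    ((Finset.univ.filter fun t : Msg m =>
        cw (deltac X) (delta Y) (delta Z) (delta W) t = 0).card
      = 2 ^ (3 * m - (Y.card + Z.card + W.card))) ∧
    ((Finset.univ.filter fun t : Msg m =>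
        2 * cw (deltac X) (delta Y) (delta Z) (delta W) t
          = 2 ^ (m + (Y.card + Z.card + W.card))).card
      = (2 ^ (m - X.card) - 1) * 2 ^ (3 * m - (Y.card + Z.card + W.card))) ∧
    ((Finset.univ.filter fun t : Msg m =>
        2 * cw (deltac X) (delta Y) (delta Z) (delta W) t
          = (2 ^ m - 2 ^ X.card) * 2 ^ (Y.card + Z.card + W.card)).card
      = (2 ^ (m + (Y.card + Z.card + W.card)) - 2 ^ (m - X.card)) *
          2 ^ (3 * m - (Y.card + Z.card + W.card))) := by
  have hYm : Y.card ≤ m := by simpa using Finset.card_le_univ Y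
  have hZm : Z.card ≤ m := by simpa using Finset.card_le_univ Z
  have hWm : W.card ≤ m := by simpa using Finset.card_le_univ W
  set b := Y.card + Z.card + W.card with hb
  have hbpow : (2:ℕ) ^ Y.card * (2 ^ Z.card * 2 ^ W.card) = 2 ^ b := by
    rw [hb, pow_add, pow_add, mul_assoc]
  have hXpow : (2:ℕ) ^ X.card < 2 ^ m := Nat.pow_lt_pow_right one_lt_two hX
  have hbpos : 0 < (2:ℕ) ^ b := pow_pos (by norm_num) _
  have hN2pos : 0 < ((2:ℕ) ^ m - 2 ^ X.card) * 2 ^ b :=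
    Nat.mul_pos (by omega) hbpos
  have hN1pos : 0 < (2:ℕ) ^ (m + b) := pow_pos (by norm_num) _
  have hN1N2 : (2:ℕ) ^ (m + b) ≠ (2 ^ m - 2 ^ X.card) * 2 ^ b := by
    rw [pow_add]
    have h5 : ((2:ℕ) ^ m - 2 ^ X.card) * 2 ^ b < 2 ^ m * 2 ^ b :=
      (Nat.mul_lt_mul_right hbpos).mpr (Nat.sub_lt (pow_pos (by norm_num) m) (pow_pos (by norm_num) X.card))
    omega
  have w0 : ∀ t : Msg m, Q0 Y Z W t →
      cw (deltac X) (delta Y) (delta Z) (delta W) t = 0 :=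
    fun t h => weight0 X Y Z W t h
  have w1 : ∀ t : Msg m, Q1 X Y Z W t →
      2 * cw (deltac X) (delta Y) (delta Z) (delta W) t = 2 ^ (m + b) := by
    intro t h
    rw [weight1 X Y Z W t h.1 h.2.1 h.2.2.1 h.2.2.2.1 h.2.2.2.2, hbpow, ← pow_add]
  have w2 : ∀ t : Msg m, ¬ Q0 Y Z W t → ¬ Q1 X Y Z W t →
      2 * cw (deltac X) (delta Y) (delta Z) (delta W) t
        = (2 ^ m - 2 ^ X.card) * 2 ^ b := by
    intro t h0 h1
    rw [weight2 X Y Z W t h0 h1, hbpow]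
  have e0 : (Finset.univ.filter fun t : Msg m =>
      cw (deltac X) (delta Y) (delta Z) (delta W) t = 0)
      = Finset.univ.filter (Q0 Y Z W) := by
    apply Finset.filter_congr
    intro t _
    constructor
    · intro h
      by_contra h0
      by_cases h1 : Q1 X Y Z W t
      · have h2 := w1 t h1
        rw [h] at h2
        omega
      · have h2 := w2 t h0 h1
        rw [h] at h2
        omega
    · exact w0 t
  have e1 : (Finset.univ.filter fun t : Msg m =>
      2 * cw (deltac X) (delta Y) (delta Z) (delta W) t = 2 ^ (m + b))
      = Finset.univ.filter (Q1 X Y Z W) := by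
    apply Finset.filter_congr
    intro t _
    constructor
    · intro h
      by_cases h1 : Q1 X Y Z W t
      · exact h1
      · exfalso
        by_cases h0 : Q0 Y Z W t
        · have h2 := w0 t h0
          rw [h2] at h
          omega
        · have h2 := w2 t h0 h1
          omega
    · exact w1 t
  have e2 : (Finset.univ.filter fun t : Msg m =>
      2 * cw (deltac X) (delta Y) (delta Z) (delta W) t
        = (2 ^ m - 2 ^ X.card) * 2 ^ b)
      = Finset.univ.filter (fun t : Msg m => ¬ Q0 Y Z W t ∧ ¬ Q1 X Y Z W t) := by
    apply Finset.filter_congr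
    intro t _
    constructor
    · intro h
      constructor
      · intro h0
        have h2 := w0 t h0
        rw [h2] at h
        omega
      · intro h1
        have h2 := w1 t h1
        omega
    · intro h
      exact w2 t h.1 h.2
  have hc0 : (Finset.univ.filter (Q0 Y Z W)).card = 2 ^ (3 * m - b) := by
    rw [card_Q0, ← pow_add, ← pow_add]
    congr 1
    omega
  have hc1 : (Finset.univ.filter (Q1 X Y Z W)).card
      = (2 ^ (m - X.card) - 1) * 2 ^ (3 * m - b) := by
    rw [card_Q1]
    have h : 2 ^ (m - Y.card) * (2 ^ (m - Z.card) * (2 ^ (m - W.card) *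
          (2 ^ (m - X.card) - 1)))
        = (2 ^ (m - X.card) - 1) *
          (2 ^ (m - Y.card) * (2 ^ (m - Z.card) * 2 ^ (m - W.card))) := by ring
    rw [h, ← pow_add, ← pow_add]
    congr 2
    omega
  have hdisj : Disjoint (Finset.univ.filter (Q0 Y Z W))
      (Finset.univ.filter (Q1 X Y Z W)) := by
    rw [Finset.disjoint_filter]
    intro t _ h0 h1
    exact h1.2.2.2.1 h0.2.2.2
  have hcu : (Finset.univ : Finset (Msg m)).card = 2 ^ (m + b) * 2 ^ (3 * m - b) := by
    rw [Finset.card_univ]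
    have hf : Fintype.card (Fin m → ZMod 2) = 2 ^ m := by simp
    show Fintype.card (Msg m) = _
    rw [Fintype.card_prod, Fintype.card_prod, Fintype.card_prod, hf,
      ← pow_add, ← pow_add, ← pow_add, ← pow_add]
    congr 1
    omega
  have hpart := Finset.card_filter_add_card_filter_not
    (s := (Finset.univ : Finset (Msg m))) (p := fun t => Q0 Y Z W t ∨ Q1 X Y Z W t)
  rw [Finset.filter_or, Finset.card_union_of_disjoint hdisj] at hpart
  have hneg : (Finset.univ.filter fun t : Msg m => ¬(Q0 Y Z W t ∨ Q1 X Y Z W t))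
      = Finset.univ.filter (fun t : Msg m => ¬ Q0 Y Z W t ∧ ¬ Q1 X Y Z W t) := by
    apply Finset.filter_congr
    intro t _
    tauto
  rw [hneg, hc0, hc1, hcu] at hpart
  have hc2 : (Finset.univ.filter
      (fun t : Msg m => ¬ Q0 Y Z W t ∧ ¬ Q1 X Y Z W t)).card
      = (2 ^ (m + b) - 2 ^ (m - X.card)) * 2 ^ (3 * m - b) := by
    have hxle : (2:ℕ) ^ (m - X.card) ≤ 2 ^ (m + b) :=
      Nat.pow_le_pow_right (by norm_num) (by omega)
    have h1' : ((2:ℕ) ^ (m - X.card) - 1) * 2 ^ (3 * m - b)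
        = 2 ^ (m - X.card) * 2 ^ (3 * m - b) - 2 ^ (3 * m - b) := by
      rw [Nat.sub_mul, one_mul]
    have h2' : ((2:ℕ) ^ (m + b) - 2 ^ (m - X.card)) * 2 ^ (3 * m - b)
        = 2 ^ (m + b) * 2 ^ (3 * m - b) - 2 ^ (m - X.card) * 2 ^ (3 * m - b) :=
      Nat.sub_mul _ _ _
    have h3' : (2:ℕ) ^ (3 * m - b) ≤ 2 ^ (m - X.card) * 2 ^ (3 * m - b) :=
      Nat.le_mul_of_pos_left _ (pow_pos (by norm_num) _)
    have h4' : (2:ℕ) ^ (m - X.card) * 2 ^ (3 * m - b)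
        ≤ 2 ^ (m + b) * 2 ^ (3 * m - b) :=
      Nat.mul_le_mul_right _ hxle
    omega
  exact ⟨by rw [e0, hc0], by rw [e1, hc1], by rw [e2, hc2]⟩
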